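/- Let (M, dist) be a metric space with doubling constant λ, i.e., for every x ∈ M and every r > 0 the closed ball b(x, r) can be covered by at most λ closed balls of radius r/2 centered at points of M. Let p = p_1, …, p_m be a curve of complexity m in M and let r > 0. Then there exists a set S of at most (4λ)^m curves of complexity m in M such that the discrete Fréchet ball { q ∈ M^m : d_dF(p, q) ≤ r } is contained in the union over c ∈ S of the discrete Fréchet balls { q ∈ M^m : d_dF(c, q) ≤ r/2 }. -/

import Mathlib

/-- One step of a traversal: each index advances by `0` or `1`,
and at least one of the two indices advances. -/
def FrechetStep (a b : ℕ × ℕ) : Prop :=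
  (b.1 = a.1 ∨ b.1 = a.1 + 1) ∧ (b.2 = a.2 ∨ b.2 = a.2 + 1) ∧ a.1 + a.2 < b.1 + b.2

/-- `T` is a traversal of two curves with `m` resp. `k` vertices.  Indices are
`0`-based: the vertices of the first curve are indexed `0, …, m-1` and those of
the second curve `0, …, k-1`. -/
def IsTraversal (m k : ℕ) (T : List (ℕ × ℕ)) : Prop :=
  T ≠ [] ∧ T.head? = some (0, 0) ∧ T.getLast? = some (m - 1, k - 1) ∧
    T.Chain' FrechetStep

/-- The cost of a traversal `T` of the curves `p` and `q`: the maximum of the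
pairwise distances of points paired by `T`. -/
noncomputable def travCost {M : Type*} [MetricSpace M] (p q : ℕ → M)
    (T : List (ℕ × ℕ)) : ℝ :=
  (T.map fun ij => dist (p ij.1) (q ij.2)).foldr max 0

/-- The discrete Fréchet distance between the curve with the `m` vertices
`p 0, …, p (m-1)` and the curve with the `k` vertices `q 0, …, q (k-1)`:
the minimum cost of a traversal of the two curves. -/
noncomputable def discreteFrechet {M : Type*} [MetricSpace M]
    (m : ℕ) (p : ℕ → M) (k : ℕ) (q : ℕ → M) : ℝ :=
  sInf (travCost p q '' {T | IsTraversal m k T})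

/-- A metric space `M` has doubling constant `lam` if every closed ball
`b(x, r)` can be covered by at most `lam` closed balls of radius `r / 2`
centered at points of `M`. -/
def IsDoublingWith (M : Type*) [MetricSpace M] (lam : ℕ) : Prop :=
  ∀ (x : M) (r : ℝ), 0 < r → ∃ S : Finset M, S.card ≤ lam ∧
    Metric.closedBall x r ⊆ ⋃ c ∈ S, Metric.closedBall c (r / 2)

/-! If `d_dF(p, q) ≤ r`, an optimal traversal pairs each vertex `q j` with a vertex `p (f j)` at
distance at most `r`. A traversal is a chain for the product order on index pairs, so `f` is
automatically monotone. Cover every `b(p i, r)` by `λ` balls of radius `r / 2` and replace each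
`q j` by the centre of a ball containing it: the diagonal traversal shows that this centre curve is
within `r / 2` of `q`. A centre curve is determined by the monotone map `f : Fin m → Fin m`, of
which there are at most `(2m - 1).choose m ≤ 4 ^ m` (as many as multisets of size `m`), and by
one of at most `λ` centres for each of the `m` vertices. -/

open Finset

theorem List.foldr_max_mem_cons {α : Type*} [LinearOrder α] (b : α) (l : List α) :
    l.foldr max b ∈ b :: l := by
  induction l with
  | nil => exact List.mem_singleton_self b
  | cons a l ih =>
    simp only [List.foldr_cons, List.mem_cons] at ih ⊢
    rcases max_choice a (l.foldr max b) with h | h <;> rw [h] <;> tauto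

theorem List.mem_of_isChain_le_succ {l : List ℕ} (hl : l.IsChain fun a b => b ≤ a + 1)
    {a b j : ℕ} (ha : l.head? = some a) (hb : l.getLast? = some b) (haj : a ≤ j)
    (hjb : j ≤ b) : j ∈ l := by
  induction l generalizing a with
  | nil => simp at ha
  | cons x l ih =>
    obtain rfl : x = a := by simpa using ha
    rcases haj.eq_or_lt with rfl | hlt
    · exact List.mem_cons_self
    cases l with
    | nil =>
      simp only [List.getLast?_singleton, Option.some_inj] at hb
      omega
    | cons y l =>
      rw [List.isChain_cons_cons] at hl
      exact List.mem_cons_of_mem _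
        (ih hl.2 rfl (by simpa using hb) (by omega))

theorem FrechetStep.le {a b : ℕ × ℕ} (h : FrechetStep a b) : a ≤ b := by
  obtain ⟨h₁, h₂, -⟩ := h
  exact ⟨by omega, by omega⟩

namespace IsTraversal

variable {m k : ℕ} {T : List (ℕ × ℕ)}

theorem pairwise_le (hT : IsTraversal m k T) : T.Pairwise (· ≤ ·) :=
  List.isChain_iff_pairwise.1 (hT.2.2.2.imp fun _ _ => FrechetStep.le)

theorem le_of_mem (hT : IsTraversal m k T) {x : ℕ × ℕ} (hx : x ∈ T) : x ≤ (m - 1, k - 1) := by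
  have hlast := hT.2.2.1
  rw [List.getLast?_eq_some_getLast hT.1, Option.some_inj] at hlast
  exact hlast ▸ hT.pairwise_le.rel_getLast hx

theorem exists_mem_snd_eq (hT : IsTraversal m k T) {j : ℕ} (hj : j < k) : ∃ i, (i, j) ∈ T := by
  have hsnd : j ∈ T.map Prod.snd :=
    List.mem_of_isChain_le_succ
      ((List.isChain_map _).2 (hT.2.2.2.imp fun _ _ h => by rcases h.2.1 with h | h <;> omega))
      (by rw [List.head?_map, hT.2.1]; rfl) (by rw [List.getLast?_map, hT.2.2.1]; rfl)
      (Nat.zero_le j) (by omega)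
  obtain ⟨⟨i, j⟩, hx, rfl⟩ := List.mem_map.1 hsnd
  exact ⟨i, hx⟩

theorem fst_le_fst_of_snd_lt (hT : IsTraversal m k T) {x y : ℕ × ℕ} (hx : x ∈ T) (hy : y ∈ T)
    (hxy : x.2 < y.2) : x.1 ≤ y.1 := by
  have hcomparable := @List.Pairwise.forall _ (fun a b : ℕ × ℕ => a ≤ b ∨ b ≤ a) _
    ⟨fun _ _ => Or.symm⟩ (hT.pairwise_le.imp Or.inl) _ hx _ hy (by rintro rfl; omega)
  rcases hcomparable with h | h
  · exact h.1
  · exact absurd h.2 (by omega)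

theorem exists_monotone (hT : IsTraversal m k T) (hm : 1 ≤ m) :
    ∃ f : Fin k → Fin m, Monotone f ∧ ∀ j, ((f j : ℕ), (j : ℕ)) ∈ T := by
  choose g hg using fun j : Fin k => hT.exists_mem_snd_eq j.2
  have hgm : ∀ j, g j < m := fun j => by have := (hT.le_of_mem (hg j)).1; omega
  refine ⟨fun j => ⟨g j, hgm j⟩, fun a b hab => ?_, hg⟩
  rcases hab.lt_or_eq with hlt | rfl
  · exact hT.fst_le_fst_of_snd_lt (hg a) (hg b) hlt
  · exact le_rfl

end IsTraversal

section travCost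

variable {M : Type*} [MetricSpace M] {p q : ℕ → M} {T : List (ℕ × ℕ)}

theorem travCost_mem (p q : ℕ → M) (T : List (ℕ × ℕ)) :
    travCost p q T ∈ 0 :: T.map fun ij => dist (p ij.1) (q ij.2) :=
  List.foldr_max_mem_cons _ _

theorem dist_le_travCost {i j : ℕ} (hij : (i, j) ∈ T) : dist (p i) (q j) ≤ travCost p q T :=
  List.le_max_of_le' 0 (List.mem_map_of_mem hij) le_rfl

theorem travCost_le {s : ℝ} (hs : 0 ≤ s) (h : ∀ x ∈ T, dist (p x.1) (q x.2) ≤ s) :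
    travCost p q T ≤ s := by
  rcases List.mem_cons.1 (travCost_mem p q T) with h0 | hmem
  · exact h0 ▸ hs
  · obtain ⟨x, hx, hcost⟩ := List.mem_map.1 hmem
    exact hcost ▸ h x hx

theorem finite_travCost_image (p q : ℕ → M) (m k : ℕ) :
    (travCost p q '' {T | IsTraversal m k T}).Finite := by
  classical
  refine (insert 0 ((Iic (m - 1) ×ˢ Iic (k - 1)).image fun ij => dist (p ij.1) (q ij.2))
    ).finite_toSet.subset ?_
  rintro _ ⟨T, hT, rfl⟩
  rcases List.mem_cons.1 (travCost_mem p q T) with h0 | hmem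
  · simp [h0]
  · obtain ⟨x, hx, hcost⟩ := List.mem_map.1 hmem
    have hle := hT.le_of_mem hx
    refine mem_coe.2 (mem_insert_of_mem (mem_image.2 ⟨x, ?_, hcost⟩))
    exact mem_product.2 ⟨mem_Iic.2 hle.1, mem_Iic.2 hle.2⟩

end travCost

section discreteFrechet

variable {M : Type*} [MetricSpace M] {m k : ℕ} {p q : ℕ → M}

theorem discreteFrechet_le_travCost {T : List (ℕ × ℕ)} (hT : IsTraversal m k T) :
    discreteFrechet m p k q ≤ travCost p q T :=
  csInf_le (finite_travCost_image p q m k).bddBelow ⟨T, hT, rfl⟩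

theorem exists_isTraversal_travCost_eq (hne : {T | IsTraversal m k T}.Nonempty) :
    ∃ T, IsTraversal m k T ∧ travCost p q T = discreteFrechet m p k q :=
  (hne.image (travCost p q)).csInf_mem (finite_travCost_image p q m k)

theorem isTraversal_diag (hm : 1 ≤ m) : IsTraversal m m ((List.range m).map fun j => (j, j)) := by
  obtain ⟨n, rfl⟩ : ∃ n, m = n + 1 := ⟨m - 1, by omega⟩
  refine ⟨by simp, by simp [List.head?_range], by simp [List.getLast?_range], ?_⟩
  change List.IsChain _ _
  rw [List.isChain_map, List.isChain_range_succ]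
  exact fun i _ => ⟨Or.inr rfl, Or.inr rfl, by omega⟩

theorem discreteFrechet_le_of_forall_dist_le (hm : 1 ≤ m) {s : ℝ}
    (h : ∀ j < m, dist (p j) (q j) ≤ s) : discreteFrechet m p m q ≤ s := by
  refine (discreteFrechet_le_travCost (isTraversal_diag hm)).trans
    (travCost_le (dist_nonneg.trans (h 0 hm)) ?_)
  intro x hx
  obtain ⟨j, hj, rfl⟩ := List.mem_map.1 hx
  exact h j (List.mem_range.1 hj)

end discreteFrechet

theorem card_filter_monotone_le {α : Type*} [Fintype α] [LinearOrder α] (m : ℕ) :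
    #{f : Fin m → α | Monotone f} ≤ (Fintype.card α + m - 1).choose m := by
  classical
  rw [← Sym.card_sym_eq_choose, ← card_univ]
  refine card_le_card_of_injOn (fun f => ⟨univ.val.map f, by simp⟩) (fun _ _ => mem_univ _) ?_
  intro f hf g hg hfg
  -- a monotone tuple is the sorted list of its multiset of values
  have hsort : ∀ f : Fin m → α, Monotone f →
      List.ofFn f = (↑(List.ofFn f) : Multiset α).sort (· ≤ ·) := fun f hf =>
    ((Multiset.coe_sort _ _).trans
      (List.mergeSort_eq_self _ (List.pairwise_ofFn.2 fun _ _ hij => hf hij.le))).symm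
  have hfg' : (↑(List.ofFn f) : Multiset α) = ↑(List.ofFn g) := by
    simpa [← Fin.univ_val_map] using congrArg Subtype.val hfg
  exact List.ofFn_injective <| by
    rw [hsort f (by simpa using hf), hsort g (by simpa using hg), hfg']

theorem card_filter_monotone_fin_le (m : ℕ) : #{f : Fin m → Fin m | Monotone f} ≤ 4 ^ m := by
  calc #{f : Fin m → Fin m | Monotone f} ≤ (m + m - 1).choose m := by
        simpa using card_filter_monotone_le (α := Fin m) m
    _ ≤ 2 ^ (m + m - 1) := Nat.choose_le_two_pow _ _
    _ ≤ 2 ^ (2 * m) := Nat.pow_le_pow_right two_pos (by omega)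
    _ = 4 ^ m := by rw [pow_mul]; norm_num

theorem exists_monotone_dist_le_of_discreteFrechet_le {M : Type*} [MetricSpace M] {m : ℕ}
    (hm : 1 ≤ m) {p q : ℕ → M} {r : ℝ} (hq : discreteFrechet m p m q ≤ r) :
    ∃ f : Fin m → Fin m, Monotone f ∧ ∀ j : Fin m, dist (p (f j)) (q j) ≤ r := by
  obtain ⟨T, hT, hcost⟩ :=
    exists_isTraversal_travCost_eq (p := p) (q := q) ⟨_, isTraversal_diag hm⟩
  obtain ⟨f, hf_mono, hf_mem⟩ := hT.exists_monotone hm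
  exact ⟨f, hf_mono, fun j => (dist_le_travCost (hf_mem j)).trans (hcost ▸ hq)⟩

/-- **Theorem 22 of the paper: doubling dimension of the discrete
Fréchet distance.** In a metric space with doubling constant `lam`, for every
curve `p` of complexity `m` and every `r > 0`, the discrete Fréchet ball of
radius `r` around `p` (among curves of complexity `m`) can be covered by at
most `(4·lam)^m` discrete Fréchet balls of radius `r/2` (around curves of
complexity `m`). -/
theorem frechet_ball_doubling {M : Type*} [MetricSpace M] (lam : ℕ)
    (h : IsDoublingWith M lam) (m : ℕ) (hm : 1 ≤ m) (p : ℕ → M) (r : ℝ)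
    (hr : 0 < r) :
    ∃ S : Finset (ℕ → M), S.card ≤ (4 * lam) ^ m ∧
      ∀ q : ℕ → M, discreteFrechet m p m q ≤ r →
        ∃ c ∈ S, discreteFrechet m c m q ≤ r / 2 := by
  classical
  choose C hC_card hC_cover using fun i => h (p i) r hr
  let centres (f : Fin m → Fin m) : Finset (ℕ → M) :=
    (Fintype.piFinset fun j => C (f j)).image fun g => Function.extend Fin.val g p
  refine ⟨Finset.biUnion {f : Fin m → Fin m | Monotone f} centres, ?_, fun q hq => ?_⟩
  · have hcentres : ∀ f, #(centres f) ≤ lam ^ m := fun f =>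
      card_image_le.trans <| (Fintype.card_piFinset _).trans_le <|
        (prod_le_pow_card _ _ _ fun j _ => hC_card (f j)).trans (by simp)
    calc _ ≤ 4 ^ m * lam ^ m :=
          (card_biUnion_le_card_mul _ _ _ fun f _ => hcentres f).trans
            (Nat.mul_le_mul_right _ (card_filter_monotone_fin_le m))
      _ = (4 * lam) ^ m := (mul_pow _ _ _).symm
  · obtain ⟨f, hf_mono, hf_dist⟩ := exists_monotone_dist_le_of_discreteFrechet_le hm hq
    have hcover : ∀ j : Fin m, ∃ c ∈ C (f j), dist c (q j) ≤ r / 2 := fun j => by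
      have hqj := hC_cover (f j) (Metric.mem_closedBall'.2 (hf_dist j))
      simp only [Set.mem_iUnion, Metric.mem_closedBall, exists_prop] at hqj
      obtain ⟨c, hc, hqc⟩ := hqj
      exact ⟨c, hc, dist_comm (q j) c ▸ hqc⟩
    choose g hgC hg using hcover
    refine ⟨Function.extend Fin.val g p,
      mem_biUnion.2 ⟨f, by simpa using hf_mono, mem_image_of_mem _ (Fintype.mem_piFinset.2 hgC)⟩, ?_⟩
    refine discreteFrechet_le_of_forall_dist_le hm fun j hj => ?_
    exact (Fin.val_injective.extend_apply g p ⟨j, hj⟩).symm ▸ hg ⟨j, hj⟩
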